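/- Let S ∈ ℂ[t] be any polynomial with complex coefficients, m a natural number, and set G := subst T (S·y^m) ∈ A⟦X⟧. Then for every 0 ≤ i ≤ n−4 one has κ²·∂_i G = m·(θH̃_i)·G + 2·H̃_i·(θG). (This is the formal counterpart, with κ² made explicit, of the paper's Proposition ∂_{i,Q} g = [g, h̃_i]₁ = h̃_i′·W g + 2·h̃_i·D g for a modular form g of weight m, every weight-m form being of the shape f^m·R(t).) -/

import Mathlib

/-!
Put `β = b / y`, so that `Q = t · exp β`, and let `h = H̃ ∘ Q` and `Θ = (θ H̃) ∘ Q`.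
The Wronskian of `y` and of the logarithmic solution `y log t + b` is constant, which reads
`P̂ y² + P y² β' = κ`. Hence `P y² Q' = κ Q`: after the substitution `X = Q` the operator `θ`
becomes `κ⁻¹ P y² d/dt`. Applied three times to `θ³ H̃ = H` and combined with reduction of
order, this shows that `κ² ∂ᵢ y - y Θ` solves `L u = 0` and vanishes at `0`, so `κ² ∂ᵢ y = y Θ`.
Differentiating the Wronskian identity with respect to `ρᵢ` then gives `κ² ∂ᵢ β = -2 h`, that is
`κ² ∂ᵢ Q = -2 h Q`. Finally `G ∘ Q = S y^m`, and the chain rule for `∂ᵢ` under substitution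
turns these two formulas into the claim composed with `Q`; composing with `T` undoes this.
-/

noncomputable section

open PowerSeries

/-- The ring of accessory parameters: polynomials in `ρ_0, …, ρ_{n-4}` over `ℂ`. -/
abbrev AccRing (n : ℕ) : Type := MvPolynomial (Fin (n - 3)) ℂ

/-- Coefficientwise partial derivative of a power series with respect to the
accessory parameter `ρ_i`. -/
noncomputable def pd {n : ℕ} (i : Fin (n - 3)) (u : PowerSeries (AccRing n)) :
    PowerSeries (AccRing n) :=
  PowerSeries.mk fun m => MvPolynomial.pderiv i (PowerSeries.coeff (R := AccRing n) m u)

/-- The polynomial `P = t·∏_{j=1}^{n-2}(t - α_j)`, viewed in `A⟦t⟧`. -/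
noncomputable def Ppoly (n : ℕ) (α : Fin (n - 2) → ℂ) : PowerSeries (AccRing n) :=
  X * ∏ j, (X - C (R := AccRing n) (MvPolynomial.C (α j)))

/-- The polynomial `P̂ = P/t = ∏_{j=1}^{n-2}(t - α_j)`, viewed in `A⟦t⟧`. -/
noncomputable def PhatPoly (n : ℕ) (α : Fin (n - 2) → ℂ) : PowerSeries (AccRing n) :=
  ∏ j, (X - C (R := AccRing n) (MvPolynomial.C (α j)))

/-- `κ = P̂(0) = (-1)^(n-2) ∏ α_j`. -/
noncomputable def kappa (n : ℕ) (α : Fin (n - 2) → ℂ) : ℂ :=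
  (-1) ^ (n - 2) * ∏ j, α j

/-- `P1 = (1 - n/2)²·t^(n-3) - ∑_{i=0}^{n-4} ρ_i·t^i`, viewed in `A⟦t⟧`. -/
noncomputable def P1poly (n : ℕ) : PowerSeries (AccRing n) :=
  C (R := AccRing n) (MvPolynomial.C ((1 - (n : ℂ) / 2) ^ 2)) * X ^ (n - 3)
    - ∑ i : Fin (n - 3), C (R := AccRing n) (MvPolynomial.X i) * X ^ (i : ℕ)

/-- The differential operator `L u = (P·u')' + P1·u`. -/
noncomputable def Lop (n : ℕ) (α : Fin (n - 2) → ℂ) (u : PowerSeries (AccRing n)) :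
    PowerSeries (AccRing n) :=
  derivative (AccRing n) (Ppoly n α * derivative (AccRing n) u) + P1poly n * u

/-- Formal antiderivative with zero constant term. -/
noncomputable def integ {A : Type*} [CommRing A] [Algebra ℚ A] (u : PowerSeries A) :
    PowerSeries A :=
  PowerSeries.mk fun m => if m = 0 then 0 else ((m : ℚ)⁻¹) • PowerSeries.coeff (R := A) (m - 1) u

/-- Formal substitution of the power series `S` (with zero constant term) into `G`. -/
noncomputable def substS {A : Type*} [CommSemiring A] (S G : PowerSeries A) : PowerSeries A :=
  PowerSeries.mk fun m =>
    ∑ j ∈ Finset.range (m + 1), PowerSeries.coeff (R := A) j G * PowerSeries.coeff (R := A) m (S ^ j)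

/-- The operator `θ G = X·dG/dX`. -/
noncomputable def theta {A : Type*} [CommRing A] (G : PowerSeries A) : PowerSeries A :=
  PowerSeries.X * PowerSeries.derivative A G

/-- The formal Eichler integral: divide the `m`-th coefficient by `m³`. -/
noncomputable def eich {A : Type*} [CommRing A] [Algebra ℚ A] (H : PowerSeries A) :
    PowerSeries A :=
  PowerSeries.mk fun m => (((m : ℚ) ^ 3)⁻¹) • PowerSeries.coeff (R := A) m H

/-- Formal exponential of a power series with zero constant term. -/
noncomputable def expS {A : Type*} [CommRing A] [Algebra ℚ A] (S : PowerSeries A) :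
    PowerSeries A :=
  substS S (PowerSeries.exp A)

namespace PowerSeries

variable {A : Type*} [CommRing A]

theorem coeff_pow_eq_zero_of_lt {g : A⟦X⟧} (hg : constantCoeff g = 0) {m d : ℕ} (h : m < d) :
    coeff m (g ^ d) = 0 := by
  obtain ⟨g₁, rfl⟩ := X_dvd_iff.mpr hg
  rw [mul_pow, coeff_X_pow_mul', if_neg (by omega)]

theorem coeff_subst_eq_sum {g : A⟦X⟧} (hg : constantCoeff g = 0) (F : A⟦X⟧) (m : ℕ) :
    coeff m (F.subst g) = ∑ j ∈ Finset.range (m + 1), coeff j F * coeff m (g ^ j) := by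
  rw [coeff_subst' (HasSubst.of_constantCoeff_zero' hg)]
  refine finsum_eq_sum_of_support_subset _ fun j hj => ?_
  by_contra hjm
  simp only [Finset.coe_range, Set.mem_Iio, not_lt] at hjm
  exact hj (by simp only; rw [coeff_pow_eq_zero_of_lt hg (by omega), smul_zero])

theorem constantCoeff_subst_of_constantCoeff_eq_zero {g : A⟦X⟧} (hg : constantCoeff g = 0)
    (F : A⟦X⟧) : constantCoeff (F.subst g) = constantCoeff F := by
  simpa using coeff_subst_eq_sum hg F 0

theorem substS_eq_subst {g : A⟦X⟧} (hg : constantCoeff g = 0) (F : A⟦X⟧) :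
    substS g F = F.subst g := by
  ext m
  rw [coeff_subst_eq_sum hg]
  simp [substS]

theorem coeff_subst_congr {g : A⟦X⟧} (hg : constantCoeff g = 0) {F₁ F₂ : A⟦X⟧} {m : ℕ}
    (h : ∀ j ≤ m, coeff j F₁ = coeff j F₂) :
    coeff m (F₁.subst g) = coeff m (F₂.subst g) := by
  simp only [coeff_subst_eq_sum hg]
  exact Finset.sum_congr rfl fun j hj => by rw [h j (by simpa [Nat.lt_succ_iff] using hj)]

theorem derivative_C_mul (a : A) (u : A⟦X⟧) : d⁄dX A (C a * u) = C a * d⁄dX A u := by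
  rw [← smul_eq_C_mul, Derivation.map_smul, smul_eq_C_mul]

def wronskian (u v : A⟦X⟧) : A⟦X⟧ := u * d⁄dX A v - d⁄dX A u * v

theorem wronskian_mul_self (y β : A⟦X⟧) : wronskian y (β * y) = y ^ 2 * d⁄dX A β := by
  rw [wronskian, Derivation.leibniz, smul_eq_mul, smul_eq_mul]
  ring

theorem subst_injective {Q T : A⟦X⟧} (hQ : constantCoeff Q = 0) (hT : constantCoeff T = 0)
    (hQT : Q.subst T = X) : Function.Injective fun F : A⟦X⟧ => F.subst Q := by
  intro F₁ F₂ h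
  have hsQ := HasSubst.of_constantCoeff_zero' hQ
  have hsT := HasSubst.of_constantCoeff_zero' hT
  simpa [subst_comp_subst_apply hsQ hsT, hQT] using congrArg (subst T) h

theorem coeff_theta (G : A⟦X⟧) (m : ℕ) : coeff m (theta G) = m * coeff m G := by
  cases m with
  | zero => simp [theta]
  | succ k => rw [theta, coeff_succ_X_mul, coeff_derivative]; push_cast; ring

theorem constantCoeff_theta (G : A⟦X⟧) : constantCoeff (theta G) = 0 := by
  simp [theta]

theorem theta_theta_theta_eich [Algebra ℚ A] {H : A⟦X⟧} (hH : constantCoeff H = 0) :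
    theta (theta (theta (eich H))) = H := by
  ext m
  simp only [coeff_theta, eich, coeff_mk]
  rcases eq_or_ne m 0 with rfl | hm
  · simp [hH]
  · rw [← map_natCast (algebraMap ℚ A), ← Algebra.smul_def, ← Algebra.smul_def,
      ← Algebra.smul_def, smul_smul, smul_smul, smul_smul]
    field_simp
    simp

theorem constantCoeff_eich [Algebra ℚ A] (H : A⟦X⟧) : constantCoeff (eich H) = 0 := by
  rw [← coeff_zero_eq_constantCoeff_apply, eich, coeff_mk]
  simp

theorem mul_subst_theta {Q W c : A⟦X⟧} (hQ : constantCoeff Q = 0) (hW : W * d⁄dX A Q = c * Q)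
    (F : A⟦X⟧) : c * (theta F).subst Q = W * d⁄dX A (F.subst Q) := by
  have hs := HasSubst.of_constantCoeff_zero' hQ
  rw [theta, subst_mul hs, subst_X hs, derivative_subst hs]
  linear_combination (-(d⁄dX A F).subst Q) * hW

theorem eq_zero_of_coeff_apply_X_pow_succ_mul [NoZeroDivisors A]
    (L : A⟦X⟧ → A⟦X⟧) (c : ℕ → A) (hc : ∀ k, c k ≠ 0)
    (hL : ∀ k v, coeff k (L (X ^ (k + 1) * v)) = c k * constantCoeff v)
    {u : A⟦X⟧} (hu : L u = 0) (h0 : constantCoeff u = 0) : u = 0 := by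
  have hdvd (k : ℕ) : X ^ (k + 1) ∣ u := by
    induction k with
    | zero => simpa using X_dvd_iff.mpr h0
    | succ k ih =>
      obtain ⟨v, rfl⟩ := ih
      have hv : constantCoeff v = 0 := by
        simpa [hu, hc k] using (hL k v).symm
      obtain ⟨w, rfl⟩ := X_dvd_iff.mpr hv
      exact ⟨w, by ring⟩
  ext m
  exact X_pow_dvd_iff.mp (hdvd m) m (by omega)

end PowerSeries

namespace Derivation

open PowerSeries

variable {R A : Type*} [CommRing R] [CommRing A] [Algebra R A] (D : Derivation R A A)

def coeffwise : Derivation R A⟦X⟧ A⟦X⟧ :=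
  Derivation.mk'
    { toFun := fun u => PowerSeries.mk fun m => D (coeff m u)
      map_add' := fun u v => by ext m; simp
      map_smul' := fun r u => by ext m; simp }
    fun u v => by
      ext m
      simp only [LinearMap.coe_mk, AddHom.coe_mk, smul_eq_mul, mul_comm v, map_add, coeff_mul,
        coeff_mk, map_sum, leibniz, ← Finset.sum_add_distrib]
      exact Finset.sum_congr rfl fun p _ => by ring

@[simp]
theorem coeff_coeffwise (u : A⟦X⟧) (m : ℕ) : coeff m (D.coeffwise u) = D (coeff m u) := by
  simp [coeffwise]

@[simp]
theorem coeffwise_C (a : A) : D.coeffwise (C a) = C (D a) := by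
  ext m
  simp only [coeff_coeffwise, coeff_C]
  split_ifs <;> simp

@[simp]
theorem coeffwise_X : D.coeffwise X = 0 := by
  ext m
  simp only [coeff_coeffwise, coeff_X, map_zero]
  split_ifs <;> simp

theorem coeffwise_map_algebraMap (f : R⟦X⟧) : D.coeffwise (map (algebraMap R A) f) = 0 := by
  ext m
  simp

theorem constantCoeff_coeffwise (u : A⟦X⟧) :
    constantCoeff (D.coeffwise u) = D (constantCoeff u) := by
  rw [← coeff_zero_eq_constantCoeff_apply, coeff_coeffwise, coeff_zero_eq_constantCoeff_apply]

theorem coeffwise_derivative (u : A⟦X⟧) :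
    D.coeffwise (d⁄dX A u) = d⁄dX A (D.coeffwise u) := by
  ext m
  simp [coeff_derivative, leibniz, mul_comm]

theorem coeffwise_subst_C_mul_X_pow {g : A⟦X⟧} (hg : constantCoeff g = 0) (a : A) (k : ℕ) :
    D.coeffwise ((C a * X ^ k).subst g)
      = (D.coeffwise (C a * X ^ k)).subst g
        + (d⁄dX A (C a * X ^ k)).subst g * D.coeffwise g := by
  have hs := HasSubst.of_constantCoeff_zero' hg
  have hmon (b : A) (j : ℕ) : (C b * X ^ j).subst g = C b * g ^ j := by
    rw [subst_mul hs, subst_pow hs, subst_X hs, subst_C]; rfl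
  have hd : d⁄dX A (C a * X ^ k) = C (a * k) * X ^ (k - 1) := by
    rw [leibniz, derivative_C, derivative_pow, derivative_X, smul_zero, add_zero, smul_eq_mul,
      map_mul, _root_.map_natCast (C (R := A))]
    ring
  have hD : D.coeffwise (C a * X ^ k) = C (D a) * X ^ k := by
    simp [leibniz, leibniz_pow, mul_comm]
  rw [hmon, hd, hD, hmon, hmon, leibniz, leibniz_pow, coeffwise_C, map_mul,
    _root_.map_natCast (C (R := A)), smul_eq_mul, smul_eq_mul, nsmul_eq_mul]
  ring

theorem coeffwise_subst_coe {g : A⟦X⟧} (hg : constantCoeff g = 0) (p : Polynomial A) :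
    D.coeffwise ((p : A⟦X⟧).subst g)
      = (D.coeffwise p).subst g + (d⁄dX A p).subst g * D.coeffwise g := by
  have hs := HasSubst.of_constantCoeff_zero' hg
  induction p using Polynomial.induction_on' with
  | add p q hp hq =>
    simp only [Polynomial.coe_add, subst_add hs, map_add, hp, hq]
    ring
  | monomial k a =>
    rw [← Polynomial.C_mul_X_pow_eq_monomial, Polynomial.coe_mul, Polynomial.coe_C,
      Polynomial.coe_pow, Polynomial.coe_X]
    exact D.coeffwise_subst_C_mul_X_pow hg a k

theorem coeffwise_subst {g : A⟦X⟧} (hg : constantCoeff g = 0) (F : A⟦X⟧) :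
    D.coeffwise (F.subst g) = (D.coeffwise F).subst g + (d⁄dX A F).subst g * D.coeffwise g := by
  -- the `m`-th coefficients of both sides only see `trunc (m + 2) F`
  ext m
  have htrunc {j : ℕ} (hj : j ≤ m + 1) : coeff j (trunc (m + 2) F) = coeff j F :=
    coeff_coe_trunc_of_lt (by omega)
  rw [coeff_coeffwise, coeff_subst_congr hg fun j hj => (htrunc (by omega)).symm,
    ← coeff_coeffwise, coeffwise_subst_coe D hg, map_add, map_add,
    coeff_subst_congr hg (F₂ := D.coeffwise F) fun j hj => by
      simp only [coeff_coeffwise, htrunc (by omega : j ≤ m + 1)],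
    coeff_mul, coeff_mul]
  refine congrArg _ (Finset.sum_congr rfl fun ab hab => congrArg (· * _) ?_)
  have := Finset.HasAntidiagonal.mem_antidiagonal.mp hab
  exact coeff_subst_congr hg fun j hj => by
    simp only [coeff_derivative, htrunc (by omega : j + 1 ≤ m + 1)]

theorem coeffwise_X_mul_exp_subst [Algebra ℚ R] [Algebra ℚ A] {β : A⟦X⟧}
    (hβ : constantCoeff β = 0) :
    D.coeffwise (X * (exp A).subst β) = X * (exp A).subst β * D.coeffwise β := by
  rw [leibniz, coeffwise_X, D.coeffwise_subst hβ, ← map_exp (algebraMap R A),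
    D.coeffwise_map_algebraMap, map_exp, derivative_exp]
  rw [← coe_substAlgHom (HasSubst.of_constantCoeff_zero' hβ), map_zero, smul_eq_mul, smul_eq_mul]
  ring

theorem mul_coeffwise_pow {y Θ c : A⟦X⟧} (hy : c * D.coeffwise y = y * Θ) (m : ℕ) :
    c * D.coeffwise (y ^ m) = m * y ^ m * Θ := by
  induction m with
  | zero => simp
  | succ m ih =>
    rw [pow_succ, leibniz, smul_eq_mul, smul_eq_mul]
    push_cast
    linear_combination y ^ m * hy + y * ih

theorem mul_coeffwise_subst_eq {Q y f G Θ h c : A⟦X⟧} (m : ℕ) (hQ : constantCoeff Q = 0)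
    (hy : c * D.coeffwise y = y * Θ) (hDQ : c * D.coeffwise Q = -(2 * h * Q))
    (hf : D.coeffwise f = 0) (hG : G.subst Q = f * y ^ m) :
    c * (D.coeffwise G).subst Q = m * Θ * G.subst Q + 2 * h * (theta G).subst Q := by
  have hs := HasSubst.of_constantCoeff_zero' hQ
  have hchain := D.coeffwise_subst hQ G
  rw [hG, leibniz, hf, smul_eq_mul, smul_eq_mul] at hchain
  rw [theta, subst_mul hs, subst_X hs, hG]
  linear_combination (-c) * hchain + f * D.mul_coeffwise_pow hy m
    - (d⁄dX A G).subst Q * hDQ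

end Derivation

def kappaSeries (n : ℕ) (α : Fin (n - 2) → ℂ) : PowerSeries (AccRing n) :=
  C (MvPolynomial.C (kappa n α))

section Operator

open MvPolynomial (pderiv)

variable {n : ℕ} {α : Fin (n - 2) → ℂ}

theorem kappa_ne_zero (hα : ∀ j, α j ≠ 0) : kappa n α ≠ 0 :=
  mul_ne_zero (pow_ne_zero _ (neg_ne_zero.mpr one_ne_zero))
    (Finset.prod_ne_zero_iff.mpr fun j _ => hα j)

theorem PhatPoly_eq_map :
    PhatPoly n α = map (algebraMap ℂ (AccRing n)) (∏ j, (X - C (α j))) := by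
  simp [PhatPoly, map_prod, MvPolynomial.algebraMap_eq]

theorem constantCoeff_PhatPoly :
    constantCoeff (PhatPoly n α) = MvPolynomial.C (kappa n α) := by
  simp [PhatPoly_eq_map, map_prod, kappa, Finset.prod_neg]

theorem Ppoly_eq_X_mul_PhatPoly : Ppoly n α = X * PhatPoly n α := rfl

theorem Ppoly_ne_zero (hα : ∀ j, α j ≠ 0) : Ppoly n α ≠ 0 := by
  refine mul_ne_zero X_ne_zero fun h => kappa_ne_zero hα ?_
  have := congrArg constantCoeff (show PhatPoly n α = 0 from h)
  rwa [constantCoeff_PhatPoly, map_zero, MvPolynomial.C_eq_zero] at this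

theorem coeff_Lop_X_pow_succ_mul (k : ℕ) (v : PowerSeries (AccRing n)) :
    coeff k (Lop n α (X ^ (k + 1) * v))
      = MvPolynomial.C (kappa n α) * ((k : AccRing n) + 1) ^ 2 * constantCoeff v := by
  set w := ((k : PowerSeries (AccRing n)) + 1) * v + X * d⁄dX _ v
  have hd : d⁄dX _ (X ^ (k + 1) * v) = X ^ k * w := by
    rw [Derivation.leibniz, Derivation.leibniz_pow, derivative_X, smul_eq_mul, smul_eq_mul,
      nsmul_eq_mul]
    push_cast
    ring
  have hP : Ppoly n α * (X ^ k * w) = X ^ (k + 1) * (PhatPoly n α * w) := by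
    rw [Ppoly_eq_X_mul_PhatPoly]; ring
  rw [Lop, hd, hP, map_add, coeff_derivative, mul_left_comm (P1poly n), coeff_X_pow_mul',
    coeff_X_pow_mul']
  simp [w, constantCoeff_PhatPoly]
  ring

theorem Lop_sub (u v : PowerSeries (AccRing n)) : Lop n α (u - v) = Lop n α u - Lop n α v := by
  simp only [Lop, map_sub, mul_sub]
  ring

theorem Lop_C_mul (a : AccRing n) (u : PowerSeries (AccRing n)) :
    Lop n α (C a * u) = C a * Lop n α u := by
  simp only [Lop, derivative_C_mul, mul_left_comm _ (C a)]
  ring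

theorem eq_of_Lop_eq (hα : ∀ j, α j ≠ 0) {u v : PowerSeries (AccRing n)}
    (h : Lop n α u = Lop n α v) (h0 : constantCoeff u = constantCoeff v) : u = v := by
  refine sub_eq_zero.mp (eq_zero_of_coeff_apply_X_pow_succ_mul (Lop n α)
    (fun k => MvPolynomial.C (kappa n α) * ((k : AccRing n) + 1) ^ 2) (fun k => ?_)
    coeff_Lop_X_pow_succ_mul (by rw [Lop_sub, h, sub_self]) (by rw [map_sub, h0, sub_self]))
  exact mul_ne_zero (by simpa using kappa_ne_zero hα)
    (pow_ne_zero _ (by exact_mod_cast k.succ_ne_zero))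

theorem derivative_Ppoly_mul_wronskian (u v : PowerSeries (AccRing n)) :
    d⁄dX _ (Ppoly n α * wronskian u v) = u * Lop n α v - v * Lop n α u := by
  simp only [wronskian, Lop, Derivation.leibniz, map_sub, smul_eq_mul]
  ring

theorem mul_Lop_mul (y w : PowerSeries (AccRing n)) :
    y * Lop n α (y * w) = w * y * Lop n α y + d⁄dX _ (Ppoly n α * y ^ 2 * d⁄dX _ w) := by
  simp only [Lop, Derivation.leibniz, Derivation.leibniz_pow, map_add, smul_eq_mul]
  ring

theorem PhatPoly_mul_sq_add_Ppoly_mul_wronskian {y b : PowerSeries (AccRing n)}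
    (hy1 : constantCoeff y = 1) (hy : Lop n α y = 0)
    (hb : Lop n α b + 2 * PhatPoly n α * d⁄dX _ y + d⁄dX _ (PhatPoly n α) * y = 0) :
    PhatPoly n α * y ^ 2 + Ppoly n α * wronskian y b = kappaSeries n α := by
  apply derivative.ext
  · rw [map_add, derivative_Ppoly_mul_wronskian, hy, kappaSeries, derivative_C,
      Derivation.leibniz, Derivation.leibniz_pow]
    simp only [smul_eq_mul, nsmul_eq_mul]
    linear_combination y * hb
  · simp [constantCoeff_PhatPoly, hy1, Ppoly_eq_X_mul_PhatPoly, kappaSeries]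

theorem PhatPoly_mul_sq_add_Ppoly_mul_sq_mul_derivative {y b yinv : PowerSeries (AccRing n)}
    (hy1 : constantCoeff y = 1) (hy : Lop n α y = 0)
    (hb : Lop n α b + 2 * PhatPoly n α * d⁄dX _ y + d⁄dX _ (PhatPoly n α) * y = 0)
    (hyinv : y * yinv = 1) :
    PhatPoly n α * y ^ 2 + Ppoly n α * y ^ 2 * d⁄dX _ (b * yinv) = kappaSeries n α := by
  rw [mul_assoc (Ppoly n α), ← wronskian_mul_self, mul_assoc, mul_comm yinv, hyinv, mul_one]
  exact PhatPoly_mul_sq_add_Ppoly_mul_wronskian hy1 hy hb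

variable (i : Fin (n - 3))

theorem coeffwise_pderiv_PhatPoly : (pderiv i).coeffwise (PhatPoly n α) = 0 := by
  rw [PhatPoly_eq_map, Derivation.coeffwise_map_algebraMap]

theorem coeffwise_pderiv_Ppoly : (pderiv i).coeffwise (Ppoly n α) = 0 := by
  simp [Ppoly_eq_X_mul_PhatPoly, coeffwise_pderiv_PhatPoly]

theorem coeffwise_pderiv_kappaSeries : (pderiv i).coeffwise (kappaSeries n α) = 0 := by
  simp [kappaSeries]

theorem coeffwise_pderiv_P1poly : (pderiv i).coeffwise (P1poly n) = -X ^ (i : ℕ) := by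
  simp [P1poly, Derivation.leibniz, Derivation.leibniz_pow, MvPolynomial.pderiv_X, Pi.single_apply]

theorem coeffwise_pderiv_Lop (u : PowerSeries (AccRing n)) :
    (pderiv i).coeffwise (Lop n α u)
      = Lop n α ((pderiv i).coeffwise u) - X ^ (i : ℕ) * u := by
  simp only [Lop, map_add, Derivation.leibniz, Derivation.coeffwise_derivative,
    coeffwise_pderiv_Ppoly, coeffwise_pderiv_P1poly, smul_eq_mul, map_zero]
  ring

theorem Ppoly_mul_sq_mul_derivative_X_mul_exp_subst {y β : PowerSeries (AccRing n)}
    (hβ : constantCoeff β = 0)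
    (hW : PhatPoly n α * y ^ 2 + Ppoly n α * y ^ 2 * d⁄dX _ β = kappaSeries n α) :
    Ppoly n α * y ^ 2 * d⁄dX _ (X * (exp (AccRing n)).subst β)
      = kappaSeries n α * (X * (exp (AccRing n)).subst β) := by
  rw [Derivation.leibniz, derivative_X, derivative_subst (HasSubst.of_constantCoeff_zero' hβ),
    derivative_exp, smul_eq_mul, smul_eq_mul]
  rw [Ppoly_eq_X_mul_PhatPoly] at hW ⊢
  linear_combination (X * (exp (AccRing n)).subst β) * hW

theorem kappaSeries_sq_mul_coeffwise_pderiv_eq (hα : ∀ j, α j ≠ 0)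
    {y Q H : PowerSeries (AccRing n)}
    (hy1 : constantCoeff y = 1) (hy : Lop n α y = 0) (hQ : constantCoeff Q = 0)
    (hODE : Ppoly n α * y ^ 2 * d⁄dX _ Q = kappaSeries n α * Q)
    (hH0 : constantCoeff H = 0) (hH : H.subst Q = Ppoly n α * X ^ (i : ℕ) * y ^ 4) :
    kappaSeries n α ^ 2 * (pderiv i).coeffwise y
      = y * (theta (eich H)).subst Q := by
  -- both sides solve `L u = κ² tⁱ y`: the left one since `∂ᵢ (L y) = L (∂ᵢ y) - tⁱ y`, the right
  -- one by reduction of order, using `θ³ H̃ = H` pulled back along `Q`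
  have pull := mul_subst_theta hQ hODE
  have hy0 : y ≠ 0 := fun h => by simp [h] at hy1
  have hΘ₂ :
      d⁄dX _ ((theta (theta (eich H))).subst Q) = kappaSeries n α * X ^ (i : ℕ) * y ^ 2 := by
    refine mul_left_cancel₀ (mul_ne_zero (Ppoly_ne_zero hα) (pow_ne_zero 2 hy0)) ?_
    rw [← pull, theta_theta_theta_eich hH0, hH]
    ring
  have hL : Lop n α (y * (theta (eich H)).subst Q) = kappaSeries n α ^ 2 * X ^ (i : ℕ) * y := by
    refine mul_left_cancel₀ hy0 ?_
    rw [mul_Lop_mul, hy, ← pull, kappaSeries, derivative_C_mul, ← kappaSeries, hΘ₂]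
    ring
  refine eq_of_Lop_eq hα ?_ ?_
  · have hLy := coeffwise_pderiv_Lop (α := α) i y
    rw [hy, map_zero] at hLy
    rw [hL, kappaSeries, ← map_pow, Lop_C_mul, map_pow]
    linear_combination (-C (MvPolynomial.C (kappa n α)) ^ 2) * hLy
  · simp [Derivation.constantCoeff_coeffwise, hy1,
      constantCoeff_subst_of_constantCoeff_eq_zero hQ, constantCoeff_theta]

theorem kappaSeries_sq_mul_coeffwise_pderiv_eq_neg (hα : ∀ j, α j ≠ 0)
    {y β h Θ : PowerSeries (AccRing n)} (hy1 : constantCoeff y = 1) (hβ : constantCoeff β = 0)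
    (hh : constantCoeff h = 0)
    (hW : PhatPoly n α * y ^ 2 + Ppoly n α * y ^ 2 * d⁄dX _ β = kappaSeries n α)
    (hy : kappaSeries n α ^ 2 * (pderiv i).coeffwise y = y * Θ)
    (hhΘ : Ppoly n α * y ^ 2 * d⁄dX _ h = kappaSeries n α * Θ) :
    kappaSeries n α ^ 2 * (pderiv i).coeffwise β = -(2 * h) := by
  have hy0 : y ≠ 0 := fun h => by simp [h] at hy1
  -- `∂ᵢ` of the identity `hW`, multiplied by `κ² y`, gives `P y³ (κ² ∂ᵢ β + 2 h)' = 0`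
  have hDW := congrArg (pderiv i).coeffwise hW
  simp only [map_add, Derivation.leibniz, Derivation.leibniz_pow, smul_eq_mul, nsmul_eq_mul,
    coeffwise_pderiv_PhatPoly, coeffwise_pderiv_Ppoly, coeffwise_pderiv_kappaSeries,
    Derivation.coeffwise_derivative] at hDW
  apply derivative.ext
  · refine mul_left_cancel₀ (mul_ne_zero (Ppoly_ne_zero hα) (pow_ne_zero 3 hy0)) ?_
    rw [kappaSeries, ← map_pow, derivative_C_mul, map_pow, ← kappaSeries, map_neg, two_mul,
      map_add]
    linear_combination (kappaSeries n α ^ 2 * y) * hDW + (2 * y) * hhΘ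
      - (2 * kappaSeries n α ^ 2 * (pderiv i).coeffwise y) * hW
      - (2 * kappaSeries n α) * hy
  · simp [Derivation.constantCoeff_coeffwise, hβ, hh]

end Operator

theorem stmt13_general (n : ℕ) (α : Fin (n - 2) → ℂ)
    (hα0 : ∀ j, α j ≠ 0)
    (y b yinv Q : PowerSeries (AccRing n))
    (hy1 : constantCoeff (R := AccRing n) y = 1) (hy : Lop n α y = 0)
    (hb0 : constantCoeff (R := AccRing n) b = 0)
    (hb : Lop n α b + 2 * PhatPoly n α * derivative (AccRing n) y
        + derivative (AccRing n) (PhatPoly n α) * y = 0)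
    (hyinv : y * yinv = 1)
    (hQ : Q = X * expS (b * yinv))
    (i : Fin (n - 3)) (H : PowerSeries (AccRing n))
    (hH0 : constantCoeff (R := AccRing n) H = 0)
    (hH : substS Q H = Ppoly n α * X ^ (i : ℕ) * y ^ 4)
    (T : PowerSeries (AccRing n)) (hT0 : constantCoeff (R := AccRing n) T = 0)
    (hTQ : substS Q T = X) (hQT : substS T Q = X)
    (S : Polynomial ℂ) (m : ℕ) (G : PowerSeries (AccRing n))
    (hG : G = substS T
        ((PowerSeries.mk fun d => (MvPolynomial.C (S.coeff d) : AccRing n)) * y ^ m)) :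
    C (R := AccRing n) (MvPolynomial.C (kappa n α)) ^ 2 * pd i G
      = (m : PowerSeries (AccRing n)) * theta (eich H) * G + 2 * eich H * theta G := by
  have hβ0 : constantCoeff (b * yinv) = 0 := by simp [hb0]
  rw [expS, substS_eq_subst hβ0] at hQ
  have hQ0 : constantCoeff Q = 0 := by simp [hQ]
  rw [substS_eq_subst hQ0] at hH hTQ
  rw [substS_eq_subst hT0] at hQT hG
  have hW := PhatPoly_mul_sq_add_Ppoly_mul_sq_mul_derivative hy1 hy hb hyinv
  have hODE : Ppoly n α * y ^ 2 * d⁄dX _ Q = kappaSeries n α * Q :=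
    hQ ▸ Ppoly_mul_sq_mul_derivative_X_mul_exp_subst hβ0 hW
  have hDy := kappaSeries_sq_mul_coeffwise_pderiv_eq i hα0 hy1 hy hQ0 hODE hH0 hH
  have hDβ := kappaSeries_sq_mul_coeffwise_pderiv_eq_neg i hα0 hy1 hβ0
    (by rw [constantCoeff_subst_of_constantCoeff_eq_zero hQ0, constantCoeff_eich]) hW hDy
    (mul_subst_theta hQ0 hODE (eich H)).symm
  have hDQ : kappaSeries n α ^ 2 * (MvPolynomial.pderiv i).coeffwise Q
      = -(2 * (eich H).subst Q * Q) := by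
    rw [hQ, Derivation.coeffwise_X_mul_exp_subst _ hβ0, ← hQ]
    linear_combination Q * hDβ
  have hGQ :
      G.subst Q = (PowerSeries.mk fun d => (MvPolynomial.C (S.coeff d) : AccRing n)) * y ^ m := by
    rw [hG, subst_comp_subst_apply (HasSubst.of_constantCoeff_zero' hT0)
      (HasSubst.of_constantCoeff_zero' hQ0), hTQ, X_subst]
  apply subst_injective hQ0 hT0 hQT
  simp only [← coe_substAlgHom (HasSubst.of_constantCoeff_zero' hQ0), map_mul, map_add, map_pow,
    map_natCast, map_ofNat]
  simp only [coe_substAlgHom]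
  rw [show (C (MvPolynomial.C (kappa n α))).subst Q = kappaSeries n α from subst_C _]
  exact (MvPolynomial.pderiv i).mul_coeffwise_subst_eq m hQ0 hDy hDQ (by ext; simp) hGQ

/-- for `G = (S·y^m) ∘ T` with `S ∈ ℂ[t]`,
`κ²·∂_i G = m·(θH̃_i)·G + 2·H̃_i·(θG)`. -/
theorem stmt13 (n : ℕ) (hn : 4 ≤ n) (α : Fin (n - 2) → ℂ)
    (hα0 : ∀ j, α j ≠ 0) (hαinj : Function.Injective α)
    (y b yinv Q : PowerSeries (AccRing n))
    (hy1 : constantCoeff (R := AccRing n) y = 1) (hy : Lop n α y = 0)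
    (hb0 : constantCoeff (R := AccRing n) b = 0)
    (hb : Lop n α b + 2 * PhatPoly n α * derivative (AccRing n) y
        + derivative (AccRing n) (PhatPoly n α) * y = 0)
    (hyinv : y * yinv = 1)
    (hQ : Q = X * expS (b * yinv))
    (i : Fin (n - 3)) (H : PowerSeries (AccRing n))
    (hH0 : constantCoeff (R := AccRing n) H = 0)
    (hH : substS Q H = Ppoly n α * X ^ (i : ℕ) * y ^ 4)
    (T : PowerSeries (AccRing n)) (hT0 : constantCoeff (R := AccRing n) T = 0)
    (hTQ : substS Q T = X) (hQT : substS T Q = X)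
    (S : Polynomial ℂ) (m : ℕ) (G : PowerSeries (AccRing n))
    (hG : G = substS T
        ((PowerSeries.mk fun d => (MvPolynomial.C (S.coeff d) : AccRing n)) * y ^ m)) :
    C (R := AccRing n) (MvPolynomial.C (kappa n α)) ^ 2 * pd i G
      = (m : PowerSeries (AccRing n)) * theta (eich H) * G + 2 * eich H * theta G :=
  stmt13_general n α hα0 y b yinv Q hy1 hy hb0 hb hyinv hQ i H hH0 hH T hT0 hTQ hQT S m G hG
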